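/- Fix δ ∈ ℤ. Let λ be a partition with a removable box e_i such that s_δ(λ) = s_δ(λ − e_i). Suppose λ/ν is a minimal δ-balanced skew with set R of matched row pairs, and let w = ∏_{{j,k} ∈ R} (jk)_− ∈ 𝒟 (the factors act on pairwise disjoint pairs of positions, hence commute). Then w · e_δ(λ − e_i) = e_δ(ν′) for some partition ν′; in particular w · e_δ(λ − e_i) is a strictly decreasing (dominant) sequence. -/
import Mathlib


/-! ### Partitions and Young diagrams (rows/columns indexed from 1) -/

/-- An integer partition, encoded as its sequence of row lengths, with
`f 0 = 0` (rows are indexed from `1`), weakly decreasing on positive indices,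
and eventually zero. -/
def IsPartition (f : ℕ → ℕ) : Prop :=
  f 0 = 0 ∧ (∀ i, 1 ≤ i → f (i + 1) ≤ f i) ∧ ∃ N, ∀ i, N ≤ i → f i = 0

/-- The boxes of the Young diagram of `f`, as pairs (row, column) of integers,
both indexed from 1. -/
def cells (f : ℕ → ℕ) : Set (ℤ × ℤ) :=
  {p | 1 ≤ p.1 ∧ 1 ≤ p.2 ∧ p.2 ≤ (f p.1.toNat : ℤ)}

/-- The skew λ/μ of two partitions. -/
def skewOf (lam mu : ℕ → ℕ) : Set (ℤ × ℤ) := cells lam \ cells mu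

/-- The δ-charge of a box `p = (i,j)`: `δ - 1 - 2 (j - i)`. -/
def chg (δ : ℤ) (p : ℤ × ℤ) : ℤ := δ - 1 - 2 * (p.2 - p.1)

/-- The π-rotation of the plane about the point `(a/2, b/2)`, as a map on boxes:
the box `(i,j)` (the unit square `[i-1,i] × [j-1,j]`) is sent to the box
`(a + 1 - i, b + 1 - j)`. -/
def boxRot (a b : ℤ) (p : ℤ × ℤ) : ℤ × ℤ := (a + 1 - p.1, b + 1 - p.2)

/-- Two boxes are adjacent when they share an edge. -/
def adjacentCell (p q : ℤ × ℤ) : Prop := |p.1 - q.1| + |p.2 - q.2| = 1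

/-- A rim: a (nonempty, finite) set of boxes which forms a path under
edge-adjacency (possibly a single box). -/
def IsRim (S : Set (ℤ × ℤ)) : Prop :=
  ∃ (n : ℕ) (s : Fin (n + 1) → ℤ × ℤ),
    Function.Injective s ∧ Set.range s = S ∧
      ∀ k l : Fin (n + 1), adjacentCell (s k) (s l) ↔ ((k : ℕ) + 1 = l ∨ (l : ℕ) + 1 = k)

/-- `MiBSWitness δ lam mu a b` : the π-rotation about the point `(a/2, b/2)`
(which lies on the δ-charge-0 diagonal) exhibits the skew λ/μ as a union of two
rims interchanged by this rotation, with no row of the skew fixed by the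
rotation (the rotation sends row `i` to row `a + 1 - i`). -/
def MiBSWitness (δ : ℤ) (lam mu : ℕ → ℕ) (a b : ℤ) : Prop :=
  b - a = δ - 1 ∧
  (∃ R1 R2 : Set (ℤ × ℤ),
      IsRim R1 ∧ IsRim R2 ∧ skewOf lam mu = R1 ∪ R2 ∧ boxRot a b '' R1 = R2) ∧
  ∀ p ∈ skewOf lam mu, 2 * p.1 ≠ a + 1

/-- λ/μ is a minimal δ-balanced skew. -/
def IsMiBS (δ : ℤ) (lam mu : ℕ → ℕ) : Prop :=
  IsPartition lam ∧ IsPartition mu ∧ cells mu ⊆ cells lam ∧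
    ∃ a b : ℤ, MiBSWitness δ lam mu a b

/-- `μ ←^δ λ` : λ/μ is a minimal δ-balanced skew. -/
def MiBSRel (δ : ℤ) (mu lam : ℕ → ℕ) : Prop := IsMiBS δ lam mu

/-- `μ <^δ λ` : the transitive closure of `←^δ`. -/
def ltDelta (δ : ℤ) : (ℕ → ℕ) → (ℕ → ℕ) → Prop := Relation.TransGen (MiBSRel δ)

/-- `μ ∼^δ λ` : the reflexive-symmetric-transitive closure of `←^δ`
(the block relation). -/
def simDelta (δ : ℤ) : (ℕ → ℕ) → (ℕ → ℕ) → Prop := Relation.EqvGen (MiBSRel δ)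

/-- Remove the last box of row `i`. -/
def removeBox (f : ℕ → ℕ) (i : ℕ) : ℕ → ℕ := fun k => if k = i then f i - 1 else f k

/-- Add a box at the end of row `i`. -/
def addBox (f : ℕ → ℕ) (i : ℕ) : ℕ → ℕ := fun k => if k = i then f i + 1 else f k

/-- The box `e_i` at the end of row `i` of `f` is removable. -/
def Removable (f : ℕ → ℕ) (i : ℕ) : Prop :=
  1 ≤ i ∧ 1 ≤ f i ∧ IsPartition (removeBox f i)

/-- The cell `p` is a removable box of the partition `f`. -/
def RemovableCell (f : ℕ → ℕ) (p : ℤ × ℤ) : Prop :=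
  ∃ i : ℕ, Removable f i ∧ p = ((i : ℤ), (f i : ℤ))

/-- `(ρ_δ)_i = -δ/2 - (i - 1)`. -/
noncomputable def rho (δ : ℤ) (i : ℕ) : ℝ := -(δ : ℝ) / 2 - ((i : ℝ) - 1)

/-- `e_δ(λ) = λ + ρ_δ ∈ ℝ^ℕ`. -/
noncomputable def eDel (δ : ℤ) (f : ℕ → ℕ) : ℕ → ℝ := fun i => (f i : ℝ) + rho δ i

/-- The singularity `s_δ(λ)`: the number of pairs `i < j` of (positive) positions
with `e_δ(λ)_i = -e_δ(λ)_j`. -/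
noncomputable def sing (δ : ℤ) (f : ℕ → ℕ) : ℕ :=
  Set.ncard {q : ℕ × ℕ | 1 ≤ q.1 ∧ q.1 < q.2 ∧ eDel δ f q.1 = -(eDel δ f q.2)}

/-- The boxes of `S` lying in row `i`. -/
def rowCells (S : Set (ℤ × ℤ)) (i : ℤ) : Set (ℤ × ℤ) := {p | p ∈ S ∧ p.1 = i}

/-- Rows `i` and `j` of the skew `S` are matched by the π-rotation about
`(a/2, b/2)`: the rotation maps the skew boxes in row `i` onto those in row `j`. -/
def MatchedRows (a b : ℤ) (S : Set (ℤ × ℤ)) (i j : ℤ) : Prop :=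
  (rowCells S i).Nonempty ∧ boxRot a b '' rowCells S i = rowCells S j

/-- `e_i` is a rim-end removable box of the skew λ/μ: a removable box of λ
contained in the skew, of maximal absolute δ-charge among such boxes. -/
def RimEndBox (δ : ℤ) (lam mu : ℕ → ℕ) (i : ℕ) : Prop :=
  Removable lam i ∧ ((i : ℤ), (lam i : ℤ)) ∈ skewOf lam mu ∧
    ∀ i' : ℕ, Removable lam i' → ((i' : ℤ), (lam i' : ℤ)) ∈ skewOf lam mu →
      |chg δ ((i' : ℤ), (lam i' : ℤ))| ≤ |chg δ ((i : ℤ), (lam i : ℤ))|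

/-- A set of boxes is boxy if every box lies in some 2×2 block of boxes
entirely contained in the set. -/
def Boxy (S : Set (ℤ × ℤ)) : Prop :=
  ∀ p ∈ S, ∃ q : ℤ × ℤ,
    p ∈ ({q, (q.1 + 1, q.2), (q.1, q.2 + 1), (q.1 + 1, q.2 + 1)} : Set (ℤ × ℤ)) ∧
    ({q, (q.1 + 1, q.2), (q.1, q.2 + 1), (q.1 + 1, q.2 + 1)} : Set (ℤ × ℤ)) ⊆ S

/-! ### Sequences, the reflection group 𝒟, and orbits -/

/-- A strongly decreasing sequence (on positive positions): `v_i - v_{i+1} ≥ 1`. -/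
def StronglyDecr (v : ℕ → ℝ) : Prop := ∀ i, 1 ≤ i → v (i + 1) ≤ v i - 1

/-- Entrywise order on sequences (positions indexed from 1). -/
def leSeq (v w : ℕ → ℝ) : Prop := ∀ i, 1 ≤ i → v i ≤ w i

/-- `w'` covers `w` in the entrywise order restricted to `S`. -/
def SeqCovers (S : Set (ℕ → ℝ)) (w w' : ℕ → ℝ) : Prop :=
  leSeq w w' ∧ w ≠ w' ∧ ¬∃ u ∈ S, u ≠ w ∧ u ≠ w' ∧ leSeq w u ∧ leSeq u w'

/-- The map `(ij)` swapping the `i`-th and `j`-th entries of a sequence. -/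
def swapFun (i j : ℕ) (v : ℕ → ℝ) : ℕ → ℝ :=
  fun k => if k = i then v j else if k = j then v i else v k

/-- The map `(ij)_-` replacing the pair of entries `(v_i, v_j)` by `(-v_j, -v_i)`. -/
def negSwapFun (i j : ℕ) (v : ℕ → ℝ) : ℕ → ℝ :=
  fun k => if k = i then -v j else if k = j then -v i else v k

lemma swapFun_involutive (i j : ℕ) : Function.Involutive (swapFun i j) := by
  intro v; funext k; unfold swapFun
  split_ifs <;> simp_all

lemma negSwapFun_involutive (i j : ℕ) : Function.Involutive (negSwapFun i j) := by
  intro v; funext k; unfold negSwapFun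
  split_ifs <;> simp_all

/-- `(ij)` as a bijection of `ℝ^ℕ`. -/
def swapPerm (i j : ℕ) : Equiv.Perm (ℕ → ℝ) :=
  Function.Involutive.toPerm _ (swapFun_involutive i j)

/-- `(ij)_-` as a bijection of `ℝ^ℕ`. -/
def negSwapPerm (i j : ℕ) : Equiv.Perm (ℕ → ℝ) :=
  Function.Involutive.toPerm _ (negSwapFun_involutive i j)

/-- The generators `(ij)`, `(ij)_-` for `1 ≤ i < j`. -/
def Dgens : Set (Equiv.Perm (ℕ → ℝ)) :=
  {g | ∃ i j : ℕ, 1 ≤ i ∧ i < j ∧ (g = swapPerm i j ∨ g = negSwapPerm i j)}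

/-- The group 𝒟 of bijections of `ℝ^ℕ` generated by all `(ij)` and `(ij)_-`. -/
def Dgroup : Subgroup (Equiv.Perm (ℕ → ℝ)) := Subgroup.closure Dgens

/-- `V(v) = 𝒟v ∩ A^+`. -/
def Vset (v : ℕ → ℝ) : Set (ℕ → ℝ) :=
  {w | (∃ g ∈ Dgroup, g v = w) ∧ StronglyDecr w}

/-- Position `i ≥ 1` of `v` belongs to no doubleton. -/
def keptPos (v : ℕ → ℝ) (i : ℕ) : Prop :=
  1 ≤ i ∧ ∀ j, 1 ≤ j → j ≠ i → v j ≠ -v i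

/-- `Reg v`: delete all entries of `v` belonging to doubletons, and re-index
the remaining entries in their original order (positions from 1). -/
noncomputable def Reg (v : ℕ → ℝ) : ℕ → ℝ :=
  fun n => if n = 0 then v 0 else v (Nat.nth (keptPos v) (n - 1))

/-- Insert the value `a` into the sequence `t` after position `i`. -/
def insertAt (t : ℕ → ℝ) (i : ℕ) (a : ℝ) : ℕ → ℝ :=
  fun k => if k ≤ i then t k else if k = i + 1 then a else t (k - 1)

/-- The set of positive naturals occurring as entries of `w`. -/
def Pmap (w : ℕ → ℝ) : Set ℕ := {n | 1 ≤ n ∧ ∃ i, 1 ≤ i ∧ w i = (n : ℝ)}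

/-- The sequence `(v_-)_i = -i`. -/
noncomputable def vminus : ℕ → ℝ := fun i => -(i : ℝ)

open Classical in
/-- The product `w = ∏_{{i,j} ∈ R} (ij)_-` over the matched row pairs of a MiBS
with π-rotation about `(a/2, ·)` (row `i` is matched with row `a + 1 - i`),
acting on a sequence `v`. -/
noncomputable def wAct (a : ℤ) (S : Set (ℤ × ℤ)) (v : ℕ → ℝ) : ℕ → ℝ :=
  fun k => if 1 ≤ k ∧ (∃ p ∈ S, p.1 = (k : ℤ)) then -v (a + 1 - (k : ℤ)).toNat else v k

/-! ### TL-diagrams -/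

/-- Reading `0` (not in `a`) as `+1` and `1` (in `a`) as `-1`:
the depth of the interval `[p, r]`. -/
def tlDepth (a : Finset ℕ) (p r : ℕ) : ℤ :=
  (((Finset.Icc p r).filter (fun i => i ∉ a)).card : ℤ) -
    (((Finset.Icc p r).filter (fun i => i ∈ a)).card : ℤ)

/-- `{p, q}` is a pair formed in the first (bracket-matching) phase of the
construction of `𝒯(a)`. -/
def MatchedPair (a : Finset ℕ) (p q : ℕ) : Prop :=
  1 ≤ p ∧ p < q ∧ p ∉ a ∧ q ∈ a ∧ tlDepth a p q = 0 ∧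
    ∀ r, p ≤ r → r < q → 0 < tlDepth a p r

/-- The `1`-positions left unpaired by the first phase. -/
def leftover (a : Finset ℕ) : Set ℕ := {q | q ∈ a ∧ ¬∃ p, MatchedPair a p q}

/-- All the pair parts of `𝒯(a)`: the matched pairs together with the
consecutive pairing (from the left) of the leftover `1`-positions. -/
noncomputable def TLpairs (a : Finset ℕ) : Set (Set ℕ) :=
  {P | (∃ p q, MatchedPair a p q ∧ P = {p, q}) ∨
       (∃ k : ℕ, 2 * k + 1 < (leftover a).ncard ∧
          P = {Nat.nth (· ∈ leftover a) (2 * k), Nat.nth (· ∈ leftover a) (2 * k + 1)})}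

/-- The parts of the partition `𝒯(a)` of `{1,2,3,…}`: the pair parts, and a
singleton for every other positive position. -/
noncomputable def TLparts (a : Finset ℕ) : Set (Set ℕ) :=
  TLpairs a ∪ {P | ∃ x : ℕ, 1 ≤ x ∧ (∀ Q ∈ TLpairs a, x ∉ Q) ∧ P = {x}}

/-! ### Brauer diagrams -/

/-- `(m,l)`-pair-partitions, encoded as fixed-point-free involutions of
`{1,…,m} ⊔ {1',…,l'}`. -/
def BrDiag (m l : ℕ) : Set ((Fin m ⊕ Fin l) → (Fin m ⊕ Fin l)) :=
  {f | Function.Involutive f ∧ ∀ x, f x ≠ x}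

/-- `Br^l(m,l)`: every primed element lies in a propagating block. -/
def BrProp (m l : ℕ) : Set ((Fin m ⊕ Fin l) → (Fin m ⊕ Fin l)) :=
  {f | f ∈ BrDiag m l ∧ ∀ i : Fin l, ∃ j : Fin m, f (Sum.inr i) = Sum.inl j}

/-- `Br^{l̲}(m,l)`: moreover the propagating blocks are non-crossing. -/
def BrNC (m l : ℕ) : Set ((Fin m ⊕ Fin l) → (Fin m ⊕ Fin l)) :=
  {f | f ∈ BrProp m l ∧ ∀ (i h : Fin l) (j k : Fin m),
      f (Sum.inr i) = Sum.inl j → f (Sum.inr h) = Sum.inl k → i < h → j < k}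

/-- The pair-partition with the same non-propagating blocks as `w`, and with
propagating block `{j, σ(i)'}` for each propagating block `{j, i'}` of `w`. -/
def brMap (m l : ℕ) (w : (Fin m ⊕ Fin l) → (Fin m ⊕ Fin l)) (σ : Equiv.Perm (Fin l)) :
    (Fin m ⊕ Fin l) → (Fin m ⊕ Fin l) :=
  fun x => Sum.map id σ (w (Sum.map id σ.symm x))


/-! ### Auxiliary lemmas for Statement 18 -/

lemma mem_skew_iff {lam nu : ℕ → ℕ} {p : ℤ × ℤ} :
    p ∈ skewOf lam nu ↔
      1 ≤ p.1 ∧ (nu p.1.toNat : ℤ) < p.2 ∧ p.2 ≤ (lam p.1.toNat : ℤ) := by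
  simp only [skewOf, cells, Set.mem_diff, Set.mem_setOf_eq]
  constructor
  · rintro ⟨⟨h1, h2, h3⟩, hc⟩
    refine ⟨h1, ?_, h3⟩
    by_contra h
    exact hc ⟨h1, h2, by omega⟩
  · rintro ⟨h1, h2, h3⟩
    have h0 : (0:ℤ) ≤ (nu p.1.toNat : ℤ) := Int.natCast_nonneg _
    exact ⟨⟨h1, by omega, h3⟩, fun hc => absurd h2 (not_lt.mpr hc.2.2)⟩

lemma mem_skew_nat {lam nu : ℕ → ℕ} {k : ℕ} {c : ℤ} :
    ((k : ℤ), c) ∈ skewOf lam nu ↔ 1 ≤ k ∧ (nu k : ℤ) < c ∧ c ≤ (lam k : ℤ) := by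
  rw [mem_skew_iff]
  simp only [Int.toNat_natCast]
  constructor
  · rintro ⟨h1, h2, h3⟩; exact ⟨by exact_mod_cast h1, h2, h3⟩
  · rintro ⟨h1, h2, h3⟩; exact ⟨by exact_mod_cast h1, h2, h3⟩

lemma boxRot_invol (a b : ℤ) (p : ℤ × ℤ) : boxRot a b (boxRot a b p) = p := by
  cases p with
  | mk x y =>
    simp only [boxRot, Prod.mk.injEq]
    constructor <;> ring

lemma rot_mem_skew {lam nu : ℕ → ℕ} {a b : ℤ}
    (hw : MiBSWitness δ' lam nu a b) :
    ∀ p ∈ skewOf lam nu, boxRot a b p ∈ skewOf lam nu := by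
  obtain ⟨_, ⟨R1, R2, _, _, hUn, hRot⟩, _⟩ := hw
  intro p hp
  rw [hUn] at hp ⊢
  rcases hp with hp | hp
  · right; rw [← hRot]; exact ⟨p, hp, rfl⟩
  · left
    rw [← hRot] at hp
    obtain ⟨q, hq, hqe⟩ := hp
    rw [← hqe, boxRot_invol]
    exact hq

/-- Key row-matching relations from rotation invariance of the skew. -/
lemma rowMatch {lam nu : ℕ → ℕ} {a b : ℤ}
    (hrot : ∀ p ∈ skewOf lam nu, boxRot a b p ∈ skewOf lam nu)
    (k : ℕ) (hk : 1 ≤ k) (hskew : nu k < lam k) :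
    1 ≤ a + 1 - (k : ℤ) ∧
      (nu (a + 1 - (k : ℤ)).toNat : ℤ) = b - (lam k : ℤ) ∧
      (lam (a + 1 - (k : ℤ)).toNat : ℤ) = b - (nu k : ℤ) := by
  have m1 : ((k : ℤ), (lam k : ℤ)) ∈ skewOf lam nu :=
    mem_skew_nat.mpr ⟨hk, by exact_mod_cast hskew, le_refl _⟩
  have m2 : ((k : ℤ), (nu k : ℤ) + 1) ∈ skewOf lam nu :=
    mem_skew_nat.mpr ⟨hk, by omega, by exact_mod_cast hskew⟩
  have q1 := hrot _ m2
  have q2 := hrot _ m1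
  rw [mem_skew_iff] at q1 q2
  simp only [boxRot] at q1 q2
  have hK1 : (1 : ℤ) ≤ a + 1 - (k : ℤ) := q1.1
  set K : ℕ := (a + 1 - (k : ℤ)).toNat with hKdef
  have hKc : (K : ℤ) = a + 1 - (k : ℤ) := Int.toNat_of_nonneg (by omega)
  have hq1a : (nu K : ℤ) < b - (nu k : ℤ) := by have := q1.2.1; omega
  have hq1b : b - (nu k : ℤ) ≤ (lam K : ℤ) := by have := q1.2.2; omega
  have hq2a : (nu K : ℤ) < b + 1 - (lam k : ℤ) := q2.2.1
  -- now use the first and last skew boxes of row K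
  have hKskew : (nu K : ℤ) < (lam K : ℤ) := lt_of_lt_of_le hq1a hq1b
  have hK1n : 1 ≤ K := by omega
  have m3 : ((K : ℤ), (lam K : ℤ)) ∈ skewOf lam nu :=
    mem_skew_nat.mpr ⟨hK1n, hKskew, le_refl _⟩
  have m4 : ((K : ℤ), (nu K : ℤ) + 1) ∈ skewOf lam nu :=
    mem_skew_nat.mpr ⟨hK1n, by omega, by omega⟩
  have q3 := hrot _ m3
  have q4 := hrot _ m4
  rw [mem_skew_iff] at q3 q4
  simp only [boxRot] at q3 q4
  have hback : a + 1 - (K : ℤ) = (k : ℤ) := by omega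
  rw [hback] at q3 q4
  simp only [Int.toNat_natCast] at q3 q4
  have hq3 : (nu k : ℤ) < b + 1 - (lam K : ℤ) := q3.2.1
  have hq4 : b + 1 - ((nu K : ℤ) + 1) ≤ (lam k : ℤ) := q4.2.2
  exact ⟨hK1, by omega, by omega⟩

lemma nu_le_lam {lam nu : ℕ → ℕ} (hsub : cells nu ⊆ cells lam) (k : ℕ) (hk : 1 ≤ k) :
    nu k ≤ lam k := by
  by_cases h : 1 ≤ nu k
  · have hm : ((k : ℤ), (nu k : ℤ)) ∈ cells nu := by
      simp only [cells, Set.mem_setOf_eq, Int.toNat_natCast]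
      exact ⟨by exact_mod_cast hk, by exact_mod_cast h, le_refl _⟩
    have := hsub hm
    obtain ⟨_, _, h3⟩ := this
    simp only [Int.toNat_natCast] at h3
    exact_mod_cast h3
  · omega

lemma rowSkew_iff {lam nu : ℕ → ℕ} (hsub : cells nu ⊆ cells lam) (k : ℕ) (hk : 1 ≤ k) :
    (∃ p ∈ skewOf lam nu, p.1 = (k : ℤ)) ↔ nu k < lam k := by
  constructor
  · rintro ⟨p, hp, hpk⟩
    rw [mem_skew_iff] at hp
    rw [hpk] at hp
    simp only [Int.toNat_natCast] at hp
    omega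
  · intro h
    exact ⟨((k : ℤ), (lam k : ℤ)),
      mem_skew_nat.mpr ⟨hk, by exact_mod_cast h, le_refl _⟩, rfl⟩

/-- Suppose λ has a removable box `e_i` with
`s_δ(λ) = s_δ(λ - e_i)`, and λ/ν is a minimal δ-balanced skew with π-rotation
about `(a/2, b/2)`. Then the product `w` of the commuting reflections `(jk)_-`
over the matched row pairs sends `e_δ(λ - e_i)` to `e_δ(ν')` for some
partition ν'; in particular `w · e_δ(λ - e_i)` is dominant. -/
theorem stmt18 (δ : ℤ) (lam : ℕ → ℕ) (hl : IsPartition lam) (i : ℕ)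
    (hrem : Removable lam i) (hs : sing δ lam = sing δ (removeBox lam i))
    (nu : ℕ → ℕ) (hn : IsPartition nu) (hsub : cells nu ⊆ cells lam)
    (a b : ℤ) (hw : MiBSWitness δ lam nu a b) :
    ∃ nu' : ℕ → ℕ, IsPartition nu' ∧
      wAct a (skewOf lam nu) (eDel δ (removeBox lam i)) = eDel δ nu' := by
  have hrot := rot_mem_skew hw
  have hba : b - a = δ - 1 := hw.1
  obtain ⟨hi1, hlami1, hremp⟩ := hrem
  have hstep : lam (i + 1) + 1 ≤ lam i := by
    have h := hremp.2.1 i hi1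
    simp only [removeBox, if_neg (by omega : ¬ i + 1 = i), eq_self_iff_true, if_true] at h
    omega
  have hbar : (b : ℝ) - (a : ℝ) = (δ : ℝ) - 1 := by exact_mod_cast hba
  by_cases hskewi : nu i < lam i
  · -- Case 1 : row i lies in the skew; ν' = ν plus a box in row i' = a+1-i.
    obtain ⟨hI1, hInu, hIlam⟩ := rowMatch hrot i hi1 hskewi
    obtain ⟨i', hi'c⟩ : ∃ m : ℕ, (m : ℤ) = a + 1 - (i : ℤ) :=
      ⟨(a + 1 - (i : ℤ)).toNat, Int.toNat_of_nonneg (by omega)⟩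
    have hi't : (a + 1 - (i : ℤ)).toNat = i' := by omega
    rw [hi't] at hInu hIlam
    have hi'1 : 1 ≤ i' := by omega
    have hi'skew : nu i' < lam i' := by
      have h1 : (nu i' : ℤ) < (lam i' : ℤ) := by
        rw [hInu, hIlam]
        have : (nu i : ℤ) < (lam i : ℤ) := by exact_mod_cast hskewi
        omega
      exact_mod_cast h1
    refine ⟨addBox nu i', ⟨?_, ?_, ?_⟩, ?_⟩
    · simp only [addBox, if_neg (by omega : ¬ (0 : ℕ) = i')]
      exact hn.1
    · intro k hk
      by_cases h1 : k + 1 = i'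
      · -- the crux: the rotated box is addable to ν
        simp only [addBox, if_pos h1, if_neg (by omega : ¬ k = i')]
        by_contra hcon
        have hmono : nu (k + 1) ≤ nu k := hn.2.1 k hk
        rw [h1] at hmono
        have heq : nu k = nu i' := by omega
        have hm : lam (k + 1) ≤ lam k := hl.2.1 k hk
        rw [h1] at hm
        have hkskew : nu k < lam k := by omega
        obtain ⟨hM1, hMnu, hMlam⟩ := rowMatch hrot k hk hkskew
        have hMt : (a + 1 - (k : ℤ)).toNat = i + 1 := by omega
        rw [hMt] at hMlam
        omega
      · by_cases h2 : k = i'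
        · simp only [addBox, if_neg h1, if_pos h2]
          have hmono : nu (k + 1) ≤ nu k := hn.2.1 k hk
          rw [h2] at hmono
          rw [h2]
          omega
        · simp only [addBox, if_neg h1, if_neg h2]
          exact hn.2.1 k hk
    · obtain ⟨N, hN⟩ := hn.2.2
      exact ⟨N + i' + 1, fun k hk => by
        simp only [addBox, if_neg (by omega : ¬ k = i')]
        exact hN k (by omega)⟩
    · funext k
      simp only [wAct]
      by_cases hks : 1 ≤ k ∧ ∃ p ∈ skewOf lam nu, p.1 = (k : ℤ)
      · rw [if_pos hks]
        obtain ⟨hk1, hkrow⟩ := hks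
        have hkskew : nu k < lam k := (rowSkew_iff hsub k hk1).mp hkrow
        obtain ⟨hK1, hKnu, hKlam⟩ := rowMatch hrot k hk1 hkskew
        obtain ⟨K, hKc⟩ : ∃ m : ℕ, (m : ℤ) = a + 1 - (k : ℤ) :=
          ⟨(a + 1 - (k : ℤ)).toNat, Int.toNat_of_nonneg (by omega)⟩
        have hKt : (a + 1 - (k : ℤ)).toNat = K := by omega
        rw [hKt] at hKnu hKlam ⊢
        by_cases hki' : k = i'
        · have hKi : K = i := by omega
          rw [hKi, hki']
          have hA : removeBox lam i i = lam i - 1 := by simp [removeBox]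
          have hB : addBox nu i' i' = nu i' + 1 := by simp [addBox]
          simp only [eDel, hA, hB, rho]
          have hv : ((lam i - 1 : ℕ) : ℝ) = (lam i : ℝ) - 1 := by
            rw [Nat.cast_sub hlami1, Nat.cast_one]
          have hnuI : (nu i' : ℝ) = (b : ℝ) - (lam i : ℝ) := by exact_mod_cast hInu
          have hi'r : (i' : ℝ) = (a : ℝ) + 1 - (i : ℝ) := by exact_mod_cast hi'c
          rw [hv]
          push_cast
          linarith [hbar, hnuI, hi'r]
        · have hKi : K ≠ i := by
            intro he
            apply hki'
            have : (k : ℤ) = (i' : ℤ) := by omega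
            exact_mod_cast this
          have hA : removeBox lam i K = lam K := by simp [removeBox, hKi]
          have hB : addBox nu i' k = nu k := by simp [addBox, hki']
          simp only [eDel, hA, hB, rho]
          have h1 : (lam K : ℝ) = (b : ℝ) - (nu k : ℝ) := by exact_mod_cast hKlam
          have h2 : (K : ℝ) = (a : ℝ) + 1 - (k : ℝ) := by exact_mod_cast hKc
          push_cast
          linarith [hbar, h1, h2]
      · rw [if_neg hks]
        have hval : removeBox lam i k = addBox nu i' k := by
          by_cases hk0 : k = 0
          · subst hk0
            simp only [removeBox, addBox, if_neg (by omega : ¬ (0 : ℕ) = i),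
              if_neg (by omega : ¬ (0 : ℕ) = i'), hl.1, hn.1]
          · have hk1 : 1 ≤ k := by omega
            have hnk : ¬ nu k < lam k := fun h => hks ⟨hk1, (rowSkew_iff hsub k hk1).mpr h⟩
            have hle := nu_le_lam hsub k hk1
            have hki : ¬ k = i := fun he => hnk (he ▸ hskewi)
            have hki' : ¬ k = i' := fun he => hnk (he ▸ hi'skew)
            simp only [removeBox, addBox, if_neg hki, if_neg hki']
            omega
        simp only [eDel, hval]
  · -- Case 2 : row i is not in the skew; ν' = ν minus the box in row i.
    have hle_i := nu_le_lam hsub i hi1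
    have hlameq : lam i = nu i := by omega
    have hν1 : 1 ≤ nu i := by omega
    refine ⟨removeBox nu i, ⟨?_, ?_, ?_⟩, ?_⟩
    · simp only [removeBox, if_neg (by omega : ¬ (0 : ℕ) = i)]
      exact hn.1
    · intro k hk
      by_cases h1 : k + 1 = i
      · simp only [removeBox, if_pos h1, if_neg (by omega : ¬ k = i)]
        have hmono : nu (k + 1) ≤ nu k := hn.2.1 k hk
        rw [h1] at hmono
        omega
      · by_cases h2 : k = i
        · simp only [removeBox, if_neg h1, if_pos h2]
          have hle' := nu_le_lam hsub (i + 1) (by omega)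
          rw [h2]
          omega
        · simp only [removeBox, if_neg h1, if_neg h2]
          exact hn.2.1 k hk
    · obtain ⟨N, hN⟩ := hn.2.2
      exact ⟨N + i + 1, fun k hk => by
        simp only [removeBox, if_neg (by omega : ¬ k = i)]
        exact hN k (by omega)⟩
    · funext k
      simp only [wAct]
      by_cases hks : 1 ≤ k ∧ ∃ p ∈ skewOf lam nu, p.1 = (k : ℤ)
      · rw [if_pos hks]
        obtain ⟨hk1, hkrow⟩ := hks
        have hkskew : nu k < lam k := (rowSkew_iff hsub k hk1).mp hkrow
        obtain ⟨hK1, hKnu, hKlam⟩ := rowMatch hrot k hk1 hkskew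
        obtain ⟨K, hKc⟩ : ∃ m : ℕ, (m : ℤ) = a + 1 - (k : ℤ) :=
          ⟨(a + 1 - (k : ℤ)).toNat, Int.toNat_of_nonneg (by omega)⟩
        have hKt : (a + 1 - (k : ℤ)).toNat = K := by omega
        rw [hKt] at hKnu hKlam ⊢
        have hKskew : nu K < lam K := by
          have hkk : (nu k : ℤ) < (lam k : ℤ) := by exact_mod_cast hkskew
          have : (nu K : ℤ) < (lam K : ℤ) := by omega
          exact_mod_cast this
        have hKi : ¬ K = i := fun he => hskewi (he ▸ hKskew)
        have hki : ¬ k = i := fun he => hskewi (he ▸ hkskew)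
        have hA : removeBox lam i K = lam K := by simp [removeBox, hKi]
        have hB : removeBox nu i k = nu k := by simp [removeBox, hki]
        simp only [eDel, hA, hB, rho]
        have h1 : (lam K : ℝ) = (b : ℝ) - (nu k : ℝ) := by exact_mod_cast hKlam
        have h2 : (K : ℝ) = (a : ℝ) + 1 - (k : ℝ) := by exact_mod_cast hKc
        push_cast
        linarith [hbar, h1, h2]
      · rw [if_neg hks]
        have hval : removeBox lam i k = removeBox nu i k := by
          by_cases hk0 : k = 0
          · subst hk0
            simp only [removeBox, if_neg (by omega : ¬ (0 : ℕ) = i), hl.1, hn.1]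
          · have hk1 : 1 ≤ k := by omega
            have hnk : ¬ nu k < lam k := fun h => hks ⟨hk1, (rowSkew_iff hsub k hk1).mpr h⟩
            have hle := nu_le_lam hsub k hk1
            simp only [removeBox]
            split_ifs with h
            · rw [hlameq]
            · omega
        simp only [eDel, hval]
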